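/- The language over alphabet {medicalFolder, diagnosis, analysis, treatment, descp, result} consisting of all label sequences of paths from the root to updatable treatment nodes — namely sequences matching (medicalFolder ∪ diagnosis) · treatment^* · treatment when restricted to the relevant suffix — is an infinite regular language, and it is not a finite union of languages each of the form w_0 Σ^* w_1 Σ^* ⋯ Σ^* w_k (where the w_i are fixed finite words and Σ^* denotes an arbitrary gap), i.e., it cannot be expressed as a finite union of downward XPath path patterns using only child and descendant steps. -/

import Mathlib

/-!
Every pattern with at least two fixed words has a gap `Σ*` right before its last word `w_k`, so
any letter can be inserted just before the suffix `w_k` of a word of the pattern; a pattern with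
one word contains a single word. Take `N` larger than the total length of all fixed words of the
patterns and the word `medicalFolder · treatment^N ∈ L14`: its pattern has at least two words and
its last word is a block of treatments, so inserting `analysis` in front of it yields a word of
the union outside `L14`, where the last letter other than `treatment` is always `medicalFolder` or
`diagnosis`.
-/

/-- The alphabet of element-type labels. -/
inductive Letter where
  | medicalFolder | diagnosis | analysis | treatment | descp | result
deriving DecidableEq

open Letter

/-- The language of label sequences of root-to-node paths leading to updatable
`treatment` nodes: words ending in `x · treatment^n` with `n ≥ 1` and
`x ∈ {medicalFolder, diagnosis}`. -/
def L14 : Set (List Letter) :=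
  {w | ∃ (u : List Letter) (x : Letter) (n : ℕ), 1 ≤ n ∧
    (x = medicalFolder ∨ x = diagnosis) ∧
    w = u ++ x :: List.replicate n treatment}

/-- Denotation of a downward XPath path pattern `w₀ Σ* w₁ Σ* ⋯ Σ* w_k`, given by
the list `[w₀, …, w_k]` of its fixed words: each gap `Σ*` may be filled by an
arbitrary word. -/
def patLang : List (List Letter) → Set (List Letter)
  | [] => {[]}
  | [w] => {w}
  | w :: ws => {v | ∃ (g r : List Letter), r ∈ patLang ws ∧ v = w ++ g ++ r}

namespace List

variable {α : Type*}

theorem dropWhile_replicate_append_cons [DecidableEq α] {c x : α} (hx : x ≠ c) (n : ℕ)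
    (s : List α) :
    (replicate n c ++ x :: s).dropWhile (· == c) = x :: s := by
  rw [dropWhile_append_of_pos (by simp +contextual)]
  simp [hx]

-- Both `x` and `y` are the last letter of the word that differs from `c`.
theorem eq_of_append_cons_replicate_eq [DecidableEq α] {c x y : α} (hx : x ≠ c) (hy : y ≠ c)
    {u v : List α} {m n : ℕ}
    (h : u ++ x :: replicate m c = v ++ y :: replicate n c) : x = y := by
  have := congrArg (fun w => (w.reverse.dropWhile (· == c)).head?) h
  simpa [dropWhile_replicate_append_cons, hx, hy] using this

theorem eq_replicate_of_append_eq_cons_replicate {c x : α} {v w : List α} {n : ℕ}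
    (h : v ++ w = x :: replicate n c) (hw : w.length ≤ n) : w = replicate w.length c := by
  cases v with
  | nil => subst h; simp at hw
  | cons y v => exact (append_eq_replicate_iff.1 (cons.inj h).2).2.2

end List

lemma cons_replicate_mem_L14 {n : ℕ} (hn : 1 ≤ n) :
    medicalFolder :: List.replicate n treatment ∈ L14 :=
  ⟨[], medicalFolder, n, hn, Or.inl rfl, rfl⟩

lemma append_analysis_replicate_not_mem_L14 (v : List Letter) (m : ℕ) :
    v ++ analysis :: List.replicate m treatment ∉ L14 := by
  rintro ⟨u, x, n, -, hx, h⟩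
  have := List.eq_of_append_cons_replicate_eq (by simp) (by rcases hx with rfl | rfl <;> simp) h
  rcases hx with rfl | rfl <;> simp at this

theorem L14_infinite : L14.Infinite :=
  Set.infinite_of_injective_forall_mem
    (f := fun n => medicalFolder :: List.replicate (n + 1) treatment)
    (fun m n h => by simpa using congrArg List.length h)
    (fun _ => cons_replicate_mem_L14 (by omega))

namespace RegularExpression

variable {α : Type*}

theorem mem_matches'_char_iff {c : α} {w : List α} : w ∈ (char c).matches' ↔ w = [c] :=
  Iff.rfl

theorem mem_matches'_char_star_iff {c : α} {w : List α} :
    w ∈ (char c).star.matches' ↔ ∃ k, w = List.replicate k c := by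
  simp only [matches'_star, Language.mem_kstar, matches'_char]
  constructor
  · rintro ⟨S, rfl, hS⟩
    exact ⟨S.length, by rw [List.eq_replicate_iff.2 ⟨rfl, hS⟩]; simp⟩
  · rintro ⟨k, rfl⟩
    exact ⟨List.replicate k [c], by simp, fun y hy => List.eq_of_mem_replicate hy⟩

theorem mem_matches'_star_of_forall_singleton_mem {P : RegularExpression α} {w : List α}
    (h : ∀ c ∈ w, [c] ∈ P.matches') : w ∈ P.star.matches' := by
  rw [matches'_star]
  refine Language.mem_kstar.2 ⟨w.map ([·]), w.flatMap_singleton'.symm, ?_⟩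
  simp only [List.mem_map]
  rintro _ ⟨c, hc, rfl⟩
  exact h c hc

end RegularExpression

open RegularExpression

def anyLetterRE : RegularExpression Letter :=
  char medicalFolder + char diagnosis + char analysis + char treatment + char descp + char result

lemma mem_matches'_anyLetterRE_star (w : List Letter) : w ∈ anyLetterRE.star.matches' := by
  refine mem_matches'_star_of_forall_singleton_mem fun c _ => ?_
  cases c <;>
    simp only [anyLetterRE, matches'_add, Language.mem_add, mem_matches'_char_iff] <;> simp

def L14RE : RegularExpression Letter :=
  anyLetterRE.star * (char medicalFolder + char diagnosis) * char treatment *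
    (char treatment).star

theorem matches'_L14RE : (L14RE.matches' : Set (List Letter)) = L14 := by
  ext w
  simp only [L14RE, matches'_mul, matches'_add, Language.mem_mul, Language.mem_add,
    mem_matches'_char_star_iff, mem_matches'_char_iff, mem_matches'_anyLetterRE_star]
  simp only [↓existsAndEq, and_true, true_and, List.append_assoc, and_self, List.cons_append,
    List.nil_append, exists_eq_or_imp]
  constructor
  · rintro ⟨u, ⟨k, rfl⟩ | ⟨k, rfl⟩⟩
    · exact ⟨u, _, k + 1, by omega, Or.inl rfl, rfl⟩
    · exact ⟨u, _, k + 1, by omega, Or.inr rfl, rfl⟩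
  · rintro ⟨u, x, n, hn, hx, rfl⟩
    obtain ⟨k, rfl⟩ : ∃ k, n = k + 1 := ⟨n - 1, by omega⟩
    rcases hx with rfl | rfl
    exacts [⟨u, Or.inl ⟨k, rfl⟩⟩, ⟨u, Or.inr ⟨k, rfl⟩⟩]

lemma mem_patLang_cons_cons {w w' : List Letter} {ws : List (List Letter)} {x : List Letter} :
    x ∈ patLang (w :: w' :: ws) ↔ ∃ g r, r ∈ patLang (w' :: ws) ∧ x = w ++ g ++ r :=
  Iff.rfl

lemma exists_gap_of_mem_patLang {p : List (List Letter)} (hp : 2 ≤ p.length) {x : List Letter}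
    (hx : x ∈ patLang p) :
    ∃ v wk, x = v ++ wk ∧ wk ∈ p ∧ ∀ z, v ++ z ++ wk ∈ patLang p := by
  match p, hp, hx with
  | [w, w'], _, hx =>
    obtain ⟨g, r, rfl, rfl⟩ := mem_patLang_cons_cons.1 hx
    exact ⟨w ++ g, r, by simp, by simp, fun z =>
      mem_patLang_cons_cons.2 ⟨g ++ z, r, rfl, by simp⟩⟩
  | w :: _ :: _ :: _, _, hx =>
    obtain ⟨g, r, hr, rfl⟩ := mem_patLang_cons_cons.1 hx
    obtain ⟨v, wk, rfl, hwk, hpump⟩ := exists_gap_of_mem_patLang (by simp) hr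
    exact ⟨w ++ g ++ v, wk, by simp, List.mem_cons_of_mem _ hwk, fun z =>
      mem_patLang_cons_cons.2 ⟨g, v ++ z ++ wk, hpump z, by simp⟩⟩

lemma exists_gap_of_mem_patLang_of_sum_length_lt {p : List (List Letter)} {x : List Letter}
    (hx : x ∈ patLang p) (hlong : (p.map List.length).sum < x.length) :
    ∃ v wk, x = v ++ wk ∧ wk ∈ p ∧ ∀ z, v ++ z ++ wk ∈ patLang p := by
  match p, hx with
  | [], hx => simp_all [patLang]
  | [_], hx => simp_all [patLang]
  | _ :: _ :: _, hx => exact exists_gap_of_mem_patLang (by simp) hx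

theorem L14_ne_patLang_union (ps : List (List (List Letter))) :
    L14 ≠ {w | ∃ p ∈ ps, w ∈ patLang p} := by
  intro hps
  set N := (ps.map fun p => (p.map List.length).sum).sum + 1
  have hmem : medicalFolder :: List.replicate N treatment ∈ L14 :=
    cons_replicate_mem_L14 (by omega)
  rw [hps] at hmem
  obtain ⟨p, hp, hx⟩ := hmem
  have hpN : (p.map List.length).sum < N :=
    Nat.lt_succ_of_le (List.le_sum_of_mem (List.mem_map_of_mem hp))
  obtain ⟨v, wk, hsplit, hwk, hpump⟩ :=
    exists_gap_of_mem_patLang_of_sum_length_lt hx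
      (by simp only [List.length_cons, List.length_replicate]; omega)
  have hwkN : wk.length ≤ N := (List.le_sum_of_mem (List.mem_map_of_mem hwk)).trans hpN.le
  have hrep := List.eq_replicate_of_append_eq_cons_replicate hsplit.symm hwkN
  apply append_analysis_replicate_not_mem_L14 v wk.length
  rw [← hrep, ← List.singleton_append, ← List.append_assoc, hps]
  exact ⟨p, hp, hpump _⟩

/-- `L14` is infinite, regular (denoted by some regular expression),
and is not a finite union of downward XPath path patterns
`w₀ Σ* w₁ Σ* ⋯ Σ* w_k`. -/
theorem stmt14 :
    L14.Infinite ∧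
    (∃ r : RegularExpression Letter, (r.matches' : Set (List Letter)) = L14) ∧
    ¬ ∃ ps : List (List (List Letter)),
        L14 = {w | ∃ p ∈ ps, w ∈ patLang p} :=
  ⟨L14_infinite, ⟨L14RE, matches'_L14RE⟩, fun ⟨ps, hps⟩ => L14_ne_patLang_union ps hps⟩
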